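/- Let A be a symmetric strictly semi-positive real tensor of order m and dimension n (with m ≥ 2, n ≥ 1), and let λ(A) := min{ A y^m : y ≥ 0, ‖y‖_m = 1 } (the minimum of A y^m over nonnegative vectors of unit m-norm). If x is a solution of the tensor complementarity problem TCP(A,q) for some q ∈ ℝⁿ, then ‖x‖_m^{m-1} ≤ ‖(−q)₊‖_{m/(m-1)} / λ(A), where (−q)₊ is the componentwise positive part of −q, ‖x‖_p := (∑_{i=1}^n |x_i|^p)^{1/p}. -/

import Mathlib

open Finset

/-- The `i`-th component of `A x^{m-1}` for a real tensor `A` of order `m = k+1`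
and dimension `n`. -/
def tmul {n k : ℕ} (A : (Fin (k + 1) → Fin n) → ℝ) (x : Fin n → ℝ) : Fin n → ℝ :=
  fun i => ∑ f : Fin k → Fin n, A (Fin.cons i f) * ∏ j, x (f j)

/-- `A x^m := xᵀ (A x^{m-1})`. -/
def tpow {n k : ℕ} (A : (Fin (k + 1) → Fin n) → ℝ) (x : Fin n → ℝ) : ℝ :=
  ∑ i, x i * tmul A x i

/-- `x` is a solution of the tensor complementarity problem TCP(A, q). -/
def TCPSol {n k : ℕ} (A : (Fin (k + 1) → Fin n) → ℝ) (q x : Fin n → ℝ) : Prop :=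
  (∀ i, 0 ≤ x i) ∧ (∀ i, 0 ≤ q i + tmul A x i) ∧ ∑ i, x i * (q i + tmul A x i) = 0

/-- `A` is an S-tensor: the system `A x^{m-1} > 0, x > 0` has a solution. -/
def STensor {n k : ℕ} (A : (Fin (k + 1) → Fin n) → ℝ) : Prop :=
  ∃ x : Fin n → ℝ, (∀ i, 0 < x i) ∧ ∀ i, 0 < tmul A x i

/-- `A` is strictly semi-positive. -/
def StrictlySemiPositive {n k : ℕ} (A : (Fin (k + 1) → Fin n) → ℝ) : Prop :=
  ∀ x : Fin n → ℝ, (∀ i, 0 ≤ x i) → x ≠ 0 → ∃ j, 0 < x j ∧ 0 < tmul A x j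

/-- `A` is an R₀-tensor: `x = 0` is the unique solution of TCP(A, 0). -/
def R0Tensor {n k : ℕ} (A : (Fin (k + 1) → Fin n) → ℝ) : Prop :=
  ∀ x : Fin n → ℝ, TCPSol A (fun _ => 0) x ↔ x = 0

/-- `A` is a symmetric tensor: entries invariant under permutations of the indices. -/
def TSymmetric {n k : ℕ} (A : (Fin (k + 1) → Fin n) → ℝ) : Prop :=
  ∀ (σ : Equiv.Perm (Fin (k + 1))) (g : Fin (k + 1) → Fin n), A (g ∘ σ) = A g

/-- The `p`-norm `(∑ |x_i|^p)^{1/p}` of a vector. -/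
noncomputable def pnorm {n : ℕ} (p : ℝ) (x : Fin n → ℝ) : ℝ :=
  (∑ i, |x i| ^ p) ^ (1 / p)

/-- The `∞`-norm `max_i |x_i|` of a vector. -/
noncomputable def inftynorm {n : ℕ} (x : Fin n → ℝ) : ℝ :=
  ⨆ i, |x i|

section Aux

variable {n k : ℕ}

lemma sum_cons_eq (T : (Fin (k + 1) → Fin n) → ℝ) :
    ∑ g : Fin (k + 1) → Fin n, T g
      = ∑ i : Fin n, ∑ f : Fin k → Fin n, T (Fin.cons i f) := by
  calc ∑ g : Fin (k + 1) → Fin n, T g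
      = ∑ p : Fin n × (Fin k → Fin n), T (Fin.cons p.1 p.2) :=
        (Fintype.sum_equiv (Fin.consEquiv fun _ => Fin n)
          (fun p => T (Fin.cons p.1 p.2)) T fun p => rfl).symm
    _ = ∑ i : Fin n, ∑ f : Fin k → Fin n, T (Fin.cons i f) := Fintype.sum_prod_type _

lemma tpow_eq (A : (Fin (k + 1) → Fin n) → ℝ) (x : Fin n → ℝ) :
    tpow A x = ∑ g : Fin (k + 1) → Fin n, A g * ∏ i, x (g i) := by
  rw [sum_cons_eq fun g => A g * ∏ i, x (g i)]
  unfold tpow tmul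
  refine Finset.sum_congr rfl fun i _ => ?_
  rw [Finset.mul_sum]
  refine Finset.sum_congr rfl fun f _ => ?_
  rw [Fin.prod_univ_succ]
  simp only [Fin.cons_zero, Fin.cons_succ]
  ring

lemma prod_erase_zero (h : Fin (k + 1) → ℝ) :
    ∏ i ∈ (univ.erase (0 : Fin (k + 1))), h i = ∏ l : Fin k, h l.succ := by
  have himg : (univ.erase (0 : Fin (k + 1))) = Finset.image Fin.succ univ := by
    ext a
    simp [Fin.exists_succ_eq]
  rw [himg, Finset.prod_image]
  intro a _ b _ hab
  exact Fin.succ_injective _ hab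

lemma tmul_smul (A : (Fin (k + 1) → Fin n) → ℝ) (c : ℝ) (x : Fin n → ℝ) (i : Fin n) :
    tmul A (fun i' => c * x i') i = c ^ k * tmul A x i := by
  unfold tmul
  rw [Finset.mul_sum]
  refine Finset.sum_congr rfl fun f _ => ?_
  rw [Finset.prod_mul_distrib, Finset.prod_const]
  simp only [Finset.card_univ, Fintype.card_fin]
  ring

lemma tpow_smul (A : (Fin (k + 1) → Fin n) → ℝ) (c : ℝ) (x : Fin n → ℝ) :
    tpow A (fun i => c * x i) = c ^ (k + 1) * tpow A x := by
  unfold tpow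
  rw [Finset.mul_sum]
  refine Finset.sum_congr rfl fun i _ => ?_
  rw [tmul_smul]
  ring

lemma pnorm_nonneg (p : ℝ) (x : Fin n → ℝ) : 0 ≤ pnorm p x :=
  Real.rpow_nonneg (Finset.sum_nonneg fun i _ => Real.rpow_nonneg (abs_nonneg _) _) _

lemma sum_eq_one_of_pnorm {p : ℝ} (hp : p ≠ 0) {x : Fin n → ℝ} (h : pnorm p x = 1) :
    ∑ i, |x i| ^ p = 1 := by
  have hS : (0:ℝ) ≤ ∑ i, |x i| ^ p :=
    Finset.sum_nonneg fun i _ => Real.rpow_nonneg (abs_nonneg _) _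
  calc ∑ i, |x i| ^ p = ((∑ i, |x i| ^ p) ^ (1/p : ℝ)) ^ p := by
        rw [← Real.rpow_mul hS, one_div, inv_mul_cancel₀ hp, Real.rpow_one]
    _ = 1 := by
        rw [show ((∑ i, |x i| ^ p) ^ (1/p : ℝ)) = pnorm p x from rfl, h, Real.one_rpow]

lemma pnorm_smul {p : ℝ} (hp : 0 < p) {c : ℝ} (hc : 0 ≤ c) (x : Fin n → ℝ) :
    pnorm p (fun i => c * x i) = c * pnorm p x := by
  unfold pnorm
  have h1 : ∀ i : Fin n, |c * x i| ^ p = c ^ p * |x i| ^ p := by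
    intro i
    rw [abs_mul, abs_of_nonneg hc, Real.mul_rpow hc (abs_nonneg _)]
  simp only [h1]
  rw [← Finset.mul_sum,
    Real.mul_rpow (Real.rpow_nonneg hc _)
      (Finset.sum_nonneg fun i _ => Real.rpow_nonneg (abs_nonneg _) _),
    ← Real.rpow_mul hc, mul_one_div, div_self (ne_of_gt hp), Real.rpow_one]

lemma key_identity (A : (Fin (k + 1) → Fin n) → ℝ) (hsym : TSymmetric A)
    (y : Fin n → ℝ) (j : Fin n) :
    ∑ g : Fin (k + 1) → Fin n, A g *
        ∑ i : Fin (k + 1), (∏ i' ∈ univ.erase i, y (g i')) * (if g i = j then (1:ℝ) else 0)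
      = ((k : ℝ) + 1) * tmul A y j := by
  have hswap : ∀ i : Fin (k + 1),
      (∑ g : Fin (k + 1) → Fin n,
          A g * ((∏ i' ∈ univ.erase i, y (g i')) * (if g i = j then (1:ℝ) else 0)))
        = ∑ g : Fin (k + 1) → Fin n,
            A g * ((∏ i' ∈ univ.erase 0, y (g i')) * (if g 0 = j then (1:ℝ) else 0)) := by
    intro i
    set σ : Equiv.Perm (Fin (k + 1)) := Equiv.swap 0 i with hσdef
    have hσσ : ∀ a, σ (σ a) = a := fun a => Equiv.swap_apply_self _ _ _
    have h0 : σ i = 0 := Equiv.swap_apply_right 0 i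
    refine (Fintype.sum_equiv (⟨fun g => g ∘ σ, fun g => g ∘ σ,
      fun g => funext fun a => congrArg g (hσσ a),
      fun g => funext fun a => congrArg g (hσσ a)⟩ : (Fin (k+1) → Fin n) ≃ (Fin (k+1) → Fin n))
      _ _ fun g => ?_).symm
    show A g * ((∏ i' ∈ univ.erase 0, y (g i')) * (if g 0 = j then (1:ℝ) else 0))
      = A (g ∘ σ) * ((∏ i' ∈ univ.erase i, y ((g ∘ σ) i')) * (if (g ∘ σ) i = j then (1:ℝ) else 0))
    have hA : A (g ∘ σ) = A g := hsym σ g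
    have hite : (g ∘ σ) i = g 0 := by simp [h0]
    have hprod : ∏ i' ∈ univ.erase i, y ((g ∘ σ) i') = ∏ i' ∈ univ.erase 0, y (g i') := by
      refine Finset.prod_bij (fun a _ => σ a) ?_ ?_ ?_ ?_
      · intro a ha
        simp only [Finset.mem_erase, Finset.mem_univ, and_true] at ha ⊢
        intro hcon
        exact ha (σ.injective (hcon.trans h0.symm))
      · intro a₁ h₁ a₂ h₂ hh
        exact σ.injective hh
      · intro b hb
        simp only [Finset.mem_erase, Finset.mem_univ, and_true] at hb
        refine ⟨σ b, ?_, hσσ b⟩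
        simp only [Finset.mem_erase, Finset.mem_univ, and_true]
        intro hcon
        apply hb
        have h2 := congrArg σ hcon
        rw [hσσ, h0] at h2
        exact h2
      · intro a _
        rfl
    rw [hA, hite, hprod]
  have hC : ∑ g : Fin (k + 1) → Fin n,
      A g * ((∏ i' ∈ univ.erase (0 : Fin (k + 1)), y (g i')) * (if g 0 = j then (1:ℝ) else 0))
      = tmul A y j := by
    rw [sum_cons_eq (fun g => A g *
      ((∏ i' ∈ univ.erase (0 : Fin (k + 1)), y (g i')) * (if g 0 = j then (1:ℝ) else 0)))]
    have hterm : ∀ a : Fin n, (∑ f : Fin k → Fin n,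
        A (Fin.cons a f) * ((∏ i' ∈ univ.erase (0 : Fin (k + 1)), y ((Fin.cons a f : Fin (k + 1) → Fin n) i'))
          * (if (Fin.cons a f : Fin (k + 1) → Fin n) 0 = j then (1:ℝ) else 0)))
        = if a = j then tmul A y j else 0 := by
      intro a
      by_cases h : a = j
      · rw [h]
        simp only [Fin.cons_zero, eq_self_iff_true, if_true, mul_one]
        unfold tmul
        refine Finset.sum_congr rfl fun f _ => ?_
        congr 1
        rw [prod_erase_zero]
        exact Finset.prod_congr rfl fun l _ => by rw [Fin.cons_succ]
      · simp [Fin.cons_zero, h]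
    simp only [hterm]
    simp
  calc ∑ g : Fin (k + 1) → Fin n, A g *
        ∑ i : Fin (k + 1), (∏ i' ∈ univ.erase i, y (g i')) * (if g i = j then (1:ℝ) else 0)
      = ∑ g : Fin (k + 1) → Fin n, ∑ i : Fin (k + 1),
          A g * ((∏ i' ∈ univ.erase i, y (g i')) * (if g i = j then (1:ℝ) else 0)) := by
        exact Finset.sum_congr rfl fun g _ => Finset.mul_sum _ _ _
    _ = ∑ i : Fin (k + 1), ∑ g : Fin (k + 1) → Fin n,
          A g * ((∏ i' ∈ univ.erase i, y (g i')) * (if g i = j then (1:ℝ) else 0)) :=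
        Finset.sum_comm
    _ = ∑ _i : Fin (k + 1), tmul A y j := by
        exact Finset.sum_congr rfl fun i _ => (hswap i).trans hC
    _ = ((k : ℝ) + 1) * tmul A y j := by
        rw [Finset.sum_const, Finset.card_univ, Fintype.card_fin, nsmul_eq_mul]
        push_cast
        ring

lemma hasDerivAt_tpow_sub (A : (Fin (k + 1) → Fin n) → ℝ) (hsym : TSymmetric A)
    (y : Fin n → ℝ) (j : Fin n) :
    HasDerivAt (fun ε : ℝ => tpow A (fun i => y i - ε * (if i = j then (1:ℝ) else 0)))
      (-(((k : ℝ) + 1) * tmul A y j)) 0 := by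
  have hfun : (fun ε : ℝ => tpow A (fun i => y i - ε * (if i = j then (1:ℝ) else 0)))
      = fun ε : ℝ => ∑ g : Fin (k + 1) → Fin n,
          A g * ∏ i : Fin (k + 1), (y (g i) - ε * (if g i = j then (1:ℝ) else 0)) := by
    funext ε
    rw [tpow_eq]
  rw [hfun]
  have hterm : ∀ g : Fin (k + 1) → Fin n,
      HasDerivAt (fun ε : ℝ => A g * ∏ i : Fin (k + 1),
          (y (g i) - ε * (if g i = j then (1:ℝ) else 0)))
        (A g * ∑ i : Fin (k + 1),
          (∏ i' ∈ univ.erase i, y (g i')) * (-(if g i = j then (1:ℝ) else 0))) 0 := by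
    intro g
    have hfac : ∀ i : Fin (k + 1),
        HasDerivAt (fun ε : ℝ => y (g i) - ε * (if g i = j then (1:ℝ) else 0))
          (-(if g i = j then (1:ℝ) else 0)) 0 := by
      intro i
      simpa using ((hasDerivAt_id (0:ℝ)).mul_const
        (if g i = j then (1:ℝ) else 0)).const_sub (y (g i))
    have hp := HasDerivAt.fun_finsetProd (u := (univ : Finset (Fin (k + 1))))
      (f := fun i (ε : ℝ) => y (g i) - ε * (if g i = j then (1:ℝ) else 0))
      (f' := fun i => -(if g i = j then (1:ℝ) else 0)) (fun i _ => hfac i)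
    have := hp.const_mul (A g)
    refine this.congr_deriv ?_
    congr 1
    refine Finset.sum_congr rfl fun i _ => ?_
    rw [smul_eq_mul]
    congr 1
    exact Finset.prod_congr rfl fun i' _ => by ring
  have hsum := HasDerivAt.fun_sum (fun g (_ : g ∈ (univ : Finset (Fin (k+1) → Fin n))) => hterm g)
  refine hsum.congr_deriv ?_
  symm
  rw [← key_identity A hsym y j]
  rw [← Finset.sum_neg_distrib]
  refine Finset.sum_congr rfl fun g _ => ?_
  rw [← mul_neg]
  congr 1
  rw [← Finset.sum_neg_distrib]
  exact Finset.sum_congr rfl fun i _ => by ring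

lemma lambda_pos_and_lb (hn : 1 ≤ n) (hk : 1 ≤ k)
    (A : (Fin (k + 1) → Fin n) → ℝ) (hsym : TSymmetric A) (hssp : StrictlySemiPositive A) :
    (0 < sInf {r : ℝ | ∃ y : Fin n → ℝ,
        (∀ i, 0 ≤ y i) ∧ pnorm ((k : ℝ) + 1) y = 1 ∧ tpow A y = r})
    ∧ ∀ y : Fin n → ℝ, (∀ i, 0 ≤ y i) → pnorm ((k : ℝ) + 1) y = 1 →
        sInf {r : ℝ | ∃ y : Fin n → ℝ,
          (∀ i, 0 ≤ y i) ∧ pnorm ((k : ℝ) + 1) y = 1 ∧ tpow A y = r} ≤ tpow A y := by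
  set p : ℝ := (k : ℝ) + 1 with hpdef
  have hp0 : 0 < p := by positivity
  have hpne : p ≠ 0 := ne_of_gt hp0
  set K : Set (Fin n → ℝ) := {y | (∀ i, 0 ≤ y i) ∧ pnorm p y = 1} with hKdef
  have hset : {r : ℝ | ∃ y : Fin n → ℝ,
      (∀ i, 0 ≤ y i) ∧ pnorm p y = 1 ∧ tpow A y = r} = tpow A '' K := by
    ext r
    constructor
    · rintro ⟨y, h1, h2, h3⟩
      exact ⟨y, ⟨h1, h2⟩, h3⟩
    · rintro ⟨y, ⟨h1, h2⟩, h3⟩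
      exact ⟨y, h1, h2, h3⟩
  rw [hset]
  have hcont : Continuous (tpow A : (Fin n → ℝ) → ℝ) := by
    unfold tpow tmul
    exact continuous_finset_sum _ fun i _ => (continuous_apply i).mul
      (continuous_finset_sum _ fun f _ => continuous_const.mul
        (continuous_finset_prod _ fun l _ => continuous_apply (f l)))
  have hpn : Continuous (pnorm p : (Fin n → ℝ) → ℝ) := by
    unfold pnorm
    exact (continuous_finset_sum _ fun i _ =>
      ((continuous_apply i).abs.rpow_const (fun x => Or.inr hp0.le))).rpow_const
      fun x => Or.inr (by positivity)
  have hKclosed : IsClosed K := by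
    have hKeq : K = (⋂ i, {y : Fin n → ℝ | 0 ≤ y i}) ∩ {y | pnorm p y = 1} := by
      ext z
      simp [hKdef, Set.mem_iInter]
    rw [hKeq]
    exact IsClosed.inter
      (isClosed_iInter fun i => isClosed_le continuous_const (continuous_apply i))
      (isClosed_eq hpn continuous_const)
  have hKsub : K ⊆ Metric.closedBall 0 1 := by
    intro z hz
    rw [Metric.mem_closedBall, dist_zero_right, pi_norm_le_iff_of_nonneg zero_le_one]
    intro i
    rw [Real.norm_eq_abs]
    have hsum : ∑ i', |z i'| ^ p = 1 := sum_eq_one_of_pnorm hpne hz.2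
    have h1 : |z i| ^ p ≤ 1 := hsum ▸ Finset.single_le_sum
      (fun i' _ => Real.rpow_nonneg (abs_nonneg _) _) (Finset.mem_univ i)
    have h2 : (|z i| ^ p) ^ (1/p : ℝ) ≤ (1:ℝ) ^ (1/p : ℝ) :=
      Real.rpow_le_rpow (Real.rpow_nonneg (abs_nonneg _) _) h1 (by positivity)
    rwa [Real.one_rpow, ← Real.rpow_mul (abs_nonneg _), mul_one_div, div_self hpne,
      Real.rpow_one] at h2
  have hKcpt : IsCompact K :=
    IsCompact.of_isClosed_subset (isCompact_closedBall 0 1) hKclosed hKsub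
  have hKne : K.Nonempty := by
    refine ⟨fun i => if i = (⟨0, hn⟩ : Fin n) then 1 else 0, fun i => ?_, ?_⟩
    · dsimp only
      split <;> norm_num
    · have h1 : ∀ i : Fin n, |(if i = (⟨0, hn⟩ : Fin n) then (1:ℝ) else 0)| ^ p
          = if i = (⟨0, hn⟩ : Fin n) then (1:ℝ) else 0 := by
        intro i
        split <;> simp [Real.one_rpow, Real.zero_rpow hpne]
      unfold pnorm
      simp only [h1, Finset.sum_ite_eq', Finset.mem_univ, if_true, Real.one_rpow]
  have hScpt : IsCompact (tpow A '' K) := hKcpt.image hcont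
  have hSne : (tpow A '' K).Nonempty := hKne.image _
  have hbdd : BddBelow (tpow A '' K) := hScpt.bddBelow
  have hlbpart : ∀ y : Fin n → ℝ, (∀ i, 0 ≤ y i) → pnorm p y = 1 →
      sInf (tpow A '' K) ≤ tpow A y :=
    fun y h1 h2 => csInf_le hbdd (Set.mem_image_of_mem _ ⟨h1, h2⟩)
  refine ⟨?_, hlbpart⟩
  obtain ⟨y, hyK, hyval⟩ := hScpt.sInf_mem hSne
  by_contra hcon
  push_neg at hcon
  have hle : sInf (tpow A '' K) ≤ 0 := hcon
  have hy0 : y ≠ 0 := by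
    intro h0
    have hzero : pnorm p (0 : Fin n → ℝ) = 0 := by
      unfold pnorm
      simp [Real.zero_rpow hpne, Real.zero_rpow (one_div_ne_zero hpne),
        Real.zero_rpow (inv_ne_zero hpne)]
    rw [h0] at hyK
    rw [hyK.2] at hzero
    norm_num at hzero
  obtain ⟨j, hyj, hAyj⟩ := hssp y hyK.1 hy0
  set F : ℝ → ℝ := fun ε => tpow A (fun i => y i - ε * (if i = j then (1:ℝ) else 0)) with hFdef
  have hF' : HasDerivAt F (-(((k : ℝ) + 1) * tmul A y j)) 0 := hasDerivAt_tpow_sub A hsym y j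
  have hF0 : F 0 = sInf (tpow A '' K) := by
    have heq : (fun i => y i - 0 * (if i = j then (1:ℝ) else 0)) = y := by
      funext i; ring
    rw [hFdef]
    dsimp only
    rw [heq, hyval]
  have hmin : ∀ ε ∈ Set.Ioo (0:ℝ) (y j), F 0 ≤ F ε := by
    intro ε hε
    set z : Fin n → ℝ := fun i => y i - ε * (if i = j then (1:ℝ) else 0) with hzdef
    have hznn : ∀ i, 0 ≤ z i := by
      intro i
      rw [hzdef]
      dsimp only
      split
      · rename_i h; rw [h]; simp; linarith [hε.2]
      · simp [hyK.1 i]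
    have hzj : 0 < z j := by
      rw [hzdef]; simp; linarith [hε.2]
    have hle1 : ∀ i, z i ≤ y i := by
      intro i
      rw [hzdef]
      dsimp only
      split
      · linarith [hε.1]
      · simp
    set Sz := ∑ i, |z i| ^ p with hSzdef
    have hSzle : Sz ≤ 1 := by
      rw [← sum_eq_one_of_pnorm hpne hyK.2, hSzdef]
      refine Finset.sum_le_sum fun i _ => ?_
      rw [abs_of_nonneg (hznn i), abs_of_nonneg (hyK.1 i)]
      exact Real.rpow_le_rpow (hznn i) (hle1 i) hp0.le
    have hSzpos : 0 < Sz := by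
      rw [hSzdef]
      refine Finset.sum_pos' (fun i _ => Real.rpow_nonneg (abs_nonneg _) _)
        ⟨j, Finset.mem_univ j, ?_⟩
      rw [abs_of_nonneg (hznn j)]
      exact Real.rpow_pos_of_pos hzj p
    set c := Sz ^ (1/p : ℝ) with hcdef
    have hcpos : 0 < c := Real.rpow_pos_of_pos hSzpos _
    have hcle : c ≤ 1 := by
      calc c ≤ (1:ℝ) ^ (1/p : ℝ) := Real.rpow_le_rpow hSzpos.le hSzle (by positivity)
        _ = 1 := Real.one_rpow _
    have hpnz : pnorm p z = c := by rw [hcdef, hSzdef]; rfl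
    have hwK1 : ∀ i, 0 ≤ c⁻¹ * z i := fun i => mul_nonneg (inv_nonneg.mpr hcpos.le) (hznn i)
    have hwK2 : pnorm p (fun i => c⁻¹ * z i) = 1 := by
      rw [pnorm_smul hp0 (inv_nonneg.mpr hcpos.le), hpnz, inv_mul_cancel₀ (ne_of_gt hcpos)]
    have hlow := hlbpart _ hwK1 hwK2
    rw [tpow_smul] at hlow
    have hT : sInf (tpow A '' K) * c ^ (k + 1) ≤ tpow A z := by
      have h := mul_le_mul_of_nonneg_right hlow (pow_nonneg hcpos.le (k + 1))
      calc sInf (tpow A '' K) * c ^ (k + 1)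
          ≤ ((c⁻¹) ^ (k + 1) * tpow A z) * c ^ (k + 1) := h
        _ = tpow A z := by
            rw [inv_pow, mul_comm _ (tpow A z), mul_assoc,
              inv_mul_cancel₀ (pow_ne_zero _ (ne_of_gt hcpos)), mul_one]
    have hck : c ^ (k + 1) ≤ 1 := pow_le_one₀ hcpos.le hcle
    have hmono : sInf (tpow A '' K) ≤ sInf (tpow A '' K) * c ^ (k + 1) := by
      nlinarith [mul_nonneg (neg_nonneg.mpr hle) (sub_nonneg.mpr hck)]
    have hFε : F ε = tpow A z := rfl
    rw [hF0, hFε]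
    linarith
  have hsub : Set.Ioi (0:ℝ) ⊆ {(0:ℝ)}ᶜ := fun x hx => by
    simp only [Set.mem_compl_iff, Set.mem_singleton_iff]
    exact ne_of_gt hx
  have hslope : Filter.Tendsto (slope F 0) (nhdsWithin 0 (Set.Ioi (0:ℝ)))
      (nhds (-(((k : ℝ) + 1) * tmul A y j))) :=
    (hasDerivAt_iff_tendsto_slope.mp hF').mono_left (nhdsWithin_mono _ hsub)
  have hev : ∀ᶠ ε in nhdsWithin 0 (Set.Ioi (0:ℝ)), 0 ≤ slope F 0 ε := by
    filter_upwards [Ioo_mem_nhdsGT_of_mem (Set.mem_Ico.mpr ⟨le_refl (0:ℝ), hyj⟩)] with ε hε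
    have hmin' := hmin ε hε
    rw [slope_def_field]
    apply div_nonneg (by linarith)
    simp only [sub_zero]
    exact hε.1.le
  have hge := ge_of_tendsto hslope hev
  have hpos : 0 < ((k : ℝ) + 1) * tmul A y j := by positivity
  linarith

end Aux

theorem stmt7 {n k : ℕ} (hn : 1 ≤ n) (hk : 1 ≤ k) (A : (Fin (k + 1) → Fin n) → ℝ)
    (hsym : TSymmetric A) (hssp : StrictlySemiPositive A)
    (q x : Fin n → ℝ) (hx : TCPSol A q x) :
    pnorm ((k : ℝ) + 1) x ^ k ≤
      pnorm (((k : ℝ) + 1) / k) (fun i => max (-q i) 0) /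
        sInf {r : ℝ | ∃ y : Fin n → ℝ,
          (∀ i, 0 ≤ y i) ∧ pnorm ((k : ℝ) + 1) y = 1 ∧ tpow A y = r} := by
  obtain ⟨hlampos, hlb⟩ := lambda_pos_and_lb hn hk A hsym hssp
  set p : ℝ := (k : ℝ) + 1 with hpdef
  set lam := sInf {r : ℝ | ∃ y : Fin n → ℝ,
    (∀ i, 0 ≤ y i) ∧ pnorm p y = 1 ∧ tpow A y = r} with hlamdef
  set H := pnorm (p / k) (fun i => max (-q i) 0) with hHdef
  have hHnn : 0 ≤ H := pnorm_nonneg _ _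
  have hppos : (0:ℝ) < p := by positivity
  have hpne : p ≠ 0 := ne_of_gt hppos
  by_cases hx0 : x = 0
  · subst hx0
    have hzero : pnorm p (0 : Fin n → ℝ) = 0 := by
      unfold pnorm
      simp [Real.zero_rpow hpne, Real.zero_rpow (one_div_ne_zero hpne),
        Real.zero_rpow (inv_ne_zero hpne)]
    rw [hzero, zero_pow (Nat.one_le_iff_ne_zero.mp hk)]
    exact div_nonneg hHnn hlampos.le
  · have hxnn := hx.1
    have hcomp := hx.2.2
    obtain ⟨i0, hi0⟩ : ∃ i, x i ≠ 0 := by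
      by_contra h
      push_neg at h
      exact hx0 (funext fun i => h i)
    have hSpos : 0 < ∑ i, |x i| ^ p :=
      Finset.sum_pos' (fun i _ => Real.rpow_nonneg (abs_nonneg _) _)
        ⟨i0, Finset.mem_univ _, Real.rpow_pos_of_pos (abs_pos.mpr hi0) _⟩
    set t := pnorm p x with htdef
    have htpos : 0 < t := by
      rw [htdef]
      unfold pnorm
      exact Real.rpow_pos_of_pos hSpos _
    have hyK1 : ∀ i, 0 ≤ t⁻¹ * x i := fun i => mul_nonneg (inv_nonneg.mpr htpos.le) (hxnn i)
    have hyK2 : pnorm p (fun i => t⁻¹ * x i) = 1 := by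
      rw [pnorm_smul hppos (inv_nonneg.mpr htpos.le), ← htdef,
        inv_mul_cancel₀ (ne_of_gt htpos)]
    have hlow := hlb _ hyK1 hyK2
    rw [tpow_smul] at hlow
    have h1 : lam * t ^ (k + 1) ≤ tpow A x := by
      have h := mul_le_mul_of_nonneg_right hlow (pow_nonneg htpos.le (k + 1))
      calc lam * t ^ (k + 1) ≤ ((t⁻¹) ^ (k + 1) * tpow A x) * t ^ (k + 1) := h
        _ = tpow A x := by
          rw [inv_pow, mul_comm _ (tpow A x), mul_assoc,
            inv_mul_cancel₀ (pow_ne_zero _ (ne_of_gt htpos)), mul_one]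
    have h2 : tpow A x = ∑ i, x i * (-(q i)) := by
      unfold tpow
      have hh : ∀ i : Fin n, x i * tmul A x i
          = x i * (q i + tmul A x i) + x i * (-(q i)) := fun i => by ring
      rw [Finset.sum_congr rfl fun i _ => hh i, Finset.sum_add_distrib, hcomp, zero_add]
    have h3 : ∑ i, x i * (-(q i)) ≤ ∑ i, x i * max (-(q i)) 0 :=
      Finset.sum_le_sum fun i _ => mul_le_mul_of_nonneg_left (le_max_left _ _) (hxnn i)
    have hk1 : (1:ℝ) ≤ (k:ℝ) := by exact_mod_cast hk
    have hkne : (k:ℝ) ≠ 0 := by linarith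
    have hpq : Real.HolderConjugate p (p / k) := by
      constructor
      · rw [hpdef]
        rw [inv_one, inv_div, inv_eq_one_div, ← add_div,
          div_eq_one_iff_eq (by positivity)]
        ring
      · rw [hpdef]; positivity
      · rw [hpdef]; positivity
    have h4 := Real.inner_le_Lp_mul_Lq (univ : Finset (Fin n)) x
      (fun i => max (-(q i)) 0) hpq
    have h5 : (∑ i, |x i| ^ p) ^ (1/p : ℝ) = t := rfl
    have h6 : (∑ i, |max (-(q i)) 0| ^ (p / (k:ℝ))) ^ (1/(p / (k:ℝ)) : ℝ) = H := rfl
    rw [h5, h6] at h4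
    have h7 : tpow A x ≤ t * H := by
      rw [h2]
      exact h3.trans h4
    have h8 : lam * t ^ k ≤ H := by
      have h9 : lam * t ^ (k + 1) ≤ t * H := h1.trans h7
      have h10 : lam * t ^ (k + 1) = (lam * t ^ k) * t := by ring
      rw [h10] at h9
      have h11 : (lam * t ^ k) * t ≤ H * t := by linarith [h9]
      exact le_of_mul_le_mul_right h11 htpos
    rw [le_div_iff₀ hlampos, mul_comm]
    exact h8
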